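/- arXiv:math/0509160 — 2 statements merged into one kernel-verified Lean document; each statement's English description precedes it below -/
import Mathlib

section
/- Let $k \ge 2$, and let $L$ be a linear operator on functions on $[0,1]$ reproducing polynomials of degree $\le 2k-1$, satisfying $\|f_u - Lf_u\|_\infty \le c_k$ for all $u \in (0,1)$ where $f_u(t) = (t-u)_+^{k-1}/(k-1)!$, and commuting with integration against a parameter as in the Peano kernel representation. Then for every integer $1 \le j \le k$ and every $f \in C^{k+j}[0,1]$, $\|f - Lf\|_\infty \le \frac{c_k}{(j+1)!}\,\|f^{(k+j)}\|_\infty$. -/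
open MeasureTheory intervalIntegral

section ErrorBoundAux
open MeasureTheory intervalIntegral Set Nat

lemma aux_itdw {s : Set ℝ} (U : UniqueDiffOn ℝ s) (j : ℕ) :
    ∀ (k : ℕ) (f : ℝ → ℝ), Set.EqOn (iteratedDerivWithin j (iteratedDerivWithin k f s) s)
      (iteratedDerivWithin (k + j) f s) s := by
  intro k
  induction k with
  | zero => intro f x hx; simp [iteratedDerivWithin_zero]
  | succ k IH =>
    intro f x hx
    have h1 : Set.EqOn (iteratedDerivWithin (k+1) f s) (iteratedDerivWithin k (derivWithin f s) s) s :=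
      fun y hy => congrFun iteratedDerivWithin_succ' y
    have h2 := iteratedDerivWithin_congr (n := j) h1 hx
    rw [h2, IH (derivWithin f s) hx, show k + 1 + j = (k + j) + 1 by omega,
      iteratedDerivWithin_succ' (n := k + j)]

lemma aux_contdiff {s : Set ℝ} (U : UniqueDiffOn ℝ s) (j : ℕ) :
    ∀ (k : ℕ) (f : ℝ → ℝ), ContDiffOn ℝ (k + j : ℕ) f s →
      ContDiffOn ℝ (j : ℕ) (iteratedDerivWithin k f s) s := by
  intro k
  induction k with
  | zero => intro f hf; simpa using hf
  | succ k IH =>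
    intro f hf
    have hder : ContDiffOn ℝ (k + j : ℕ) (derivWithin f s) s := by
      apply hf.derivWithin U
      exact_mod_cast (by exact_mod_cast Nat.succ_le_of_lt (by omega) : ((k+j:ℕ):WithTop ℕ∞) + 1 ≤ ((k+1+j:ℕ):WithTop ℕ∞))
    have := IH (derivWithin f s) hder
    exact this.congr fun y hy => congrFun iteratedDerivWithin_succ' y

lemma taylor_int {g : ℝ → ℝ} {n : ℕ} (hg : ContDiffOn ℝ (n + 1 : ℕ) g (Set.Icc (0:ℝ) 1))
    {x : ℝ} (hx : x ∈ Set.Icc (0:ℝ) 1) :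
    g x = taylorWithinEval g n (Set.Icc (0:ℝ) 1) 0 x +
      ∫ v in (0:ℝ)..x, ((n ! : ℝ)⁻¹ * (x - v) ^ n) •
        iteratedDerivWithin (n + 1) g (Set.Icc (0:ℝ) 1) v := by
  have U : UniqueDiffOn ℝ (Set.Icc (0:ℝ) 1) := uniqueDiffOn_Icc zero_lt_one
  obtain ⟨hx0, hx1⟩ := hx
  rcases eq_or_lt_of_le hx0 with h0 | h0
  · simp [← h0, taylorWithinEval_self]
  · -- 0 < x
    have hgn : ContDiffOn ℝ (n : ℕ) g (Set.Icc (0:ℝ) 1) := hg.of_le (by exact_mod_cast Nat.le_succ n)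
    have hdiff : DifferentiableOn ℝ (iteratedDerivWithin n g (Set.Icc (0:ℝ) 1)) (Set.Icc (0:ℝ) 1) :=
      hg.differentiableOn_iteratedDerivWithin (by exact_mod_cast Nat.lt_succ_self n) U
    have hcontD : ContinuousOn (iteratedDerivWithin (n+1) g (Set.Icc (0:ℝ) 1)) (Set.Icc (0:ℝ) 1) :=
      hg.continuousOn_iteratedDerivWithin le_rfl U
    have key := intervalIntegral.integral_eq_sub_of_hasDeriv_right_of_le (f := fun y =>
        taylorWithinEval g n (Set.Icc (0:ℝ) 1) y x)
      (f' := fun v => ((n ! : ℝ)⁻¹ * (x - v) ^ n) • iteratedDerivWithin (n + 1) g (Set.Icc (0:ℝ) 1) v)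
      hx0 ?_ ?_ ?_
    · rw [key, taylorWithinEval_self]; ring
    · -- continuity of y ↦ taylorWithinEval g n _ y x on Icc 0 x
      exact (continuousOn_taylorWithinEval U hgn).mono (Set.Icc_subset_Icc le_rfl hx1)
    · intro v hv
      have hv' : v ∈ Set.Ioo (0:ℝ) 1 := ⟨hv.1, lt_of_lt_of_le hv.2 hx1⟩
      exact (taylorWithinEval_hasDerivAt_Ioo x zero_lt_one hv' hgn
        (hdiff.mono Set.Ioo_subset_Icc_self)).hasDerivWithinAt
    · -- integrability
      apply ContinuousOn.intervalIntegrable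
      apply ContinuousOn.fun_smul
      · fun_prop
      · exact hcontD.mono (by rw [Set.uIcc_of_le hx0]; exact Set.Icc_subset_Icc le_rfl hx1)

lemma kernel_zero_right (K : ℕ) (hK : 1 ≤ K) {s : ℝ} (hs1 : s ≤ 1) (g : ℝ → ℝ) :
    ∫ u in s..1, max (s - u) 0 ^ K * g u = 0 := by
  rw [show (0:ℝ) = ∫ u in s..1, (0:ℝ) from (intervalIntegral.integral_zero).symm]
  apply intervalIntegral.integral_congr
  intro u hu
  rw [Set.uIcc_of_le hs1] at hu
  have : max (s - u) 0 = 0 := max_eq_right (by linarith [hu.1])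
  simp [this, zero_pow (by omega : K ≠ 0)]

lemma kernel_monomial (K i : ℕ) (hK : 1 ≤ K) {s : ℝ} (hs0 : 0 ≤ s) (hs1 : s ≤ 1) :
    ∫ u in (0:ℝ)..1, max (s - u) 0 ^ K * u ^ i =
      (∑ m ∈ Finset.range (i+1), (i.choose m : ℝ) * (-1)^(i-m) / ((K+(i-m)+1 : ℕ) : ℝ)) *
        s ^ (K+i+1) := by
  have hint1 : IntervalIntegrable (fun u => max (s - u) 0 ^ K * u ^ i) volume 0 s := by
    apply ContinuousOn.intervalIntegrable; fun_prop
  have hint2 : IntervalIntegrable (fun u => max (s - u) 0 ^ K * u ^ i) volume s 1 := by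
    apply ContinuousOn.intervalIntegrable; fun_prop
  rw [← intervalIntegral.integral_add_adjacent_intervals hint1 hint2,
    kernel_zero_right K hK hs1, add_zero]
  have step1 : ∫ u in (0:ℝ)..s, max (s - u) 0 ^ K * u ^ i
      = ∫ u in (0:ℝ)..s, (s - u) ^ K * u ^ i := by
    apply intervalIntegral.integral_congr
    intro u hu
    rw [Set.uIcc_of_le hs0] at hu
    have h := max_eq_left (show (0:ℝ) ≤ s - u by linarith [hu.2])
    simp only [h]
  have step2 : ∫ u in (0:ℝ)..s, (s - u) ^ K * u ^ i
      = ∫ u in (0:ℝ)..s, u ^ K * (s - u) ^ i := by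
    have := intervalIntegral.integral_comp_sub_left (a := (0:ℝ)) (b := s)
      (fun v => v ^ K * (s - v) ^ i) s
    simp only [sub_zero, sub_self] at this
    rw [← this]
    apply intervalIntegral.integral_congr
    intro u _; ring_nf
  have expand : ∀ u : ℝ, u ^ K * (s - u) ^ i =
      ∑ m ∈ Finset.range (i+1), ((i.choose m : ℝ) * (-1)^(i-m) * s ^ m) * u ^ (K+(i-m)) := by
    intro u
    rw [sub_eq_add_neg, add_pow, Finset.mul_sum]
    apply Finset.sum_congr rfl
    intro m hm
    rw [neg_pow]
    ring_nf
  have step3 : ∫ u in (0:ℝ)..s, u ^ K * (s - u) ^ i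
      = ∑ m ∈ Finset.range (i+1), ((i.choose m : ℝ) * (-1)^(i-m) * s ^ m) *
          (s ^ (K+(i-m)+1) / ((K+(i-m)+1 : ℕ) : ℝ)) := by
    rw [intervalIntegral.integral_congr (g := fun u => ∑ m ∈ Finset.range (i+1),
        ((i.choose m : ℝ) * (-1)^(i-m) * s ^ m) * u ^ (K+(i-m))) (fun u _ => expand u)]
    rw [intervalIntegral.integral_finset_sum]
    · apply Finset.sum_congr rfl
      intro m _
      rw [intervalIntegral.integral_const_mul, integral_pow]
      norm_num
    · intro m _
      apply ContinuousOn.intervalIntegrable; fun_prop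
  rw [step1, step2, step3, Finset.sum_mul]
  apply Finset.sum_congr rfl
  intro m hm
  have hmi : m ≤ i := Nat.lt_succ_iff.mp (Finset.mem_range.mp hm)
  have hpow : s ^ m * s ^ (K+(i-m)+1) = s ^ (K+i+1) := by
    rw [← pow_add]; congr 1; omega
  calc (i.choose m : ℝ) * (-1)^(i-m) * s ^ m * (s ^ (K+(i-m)+1) / ((K+(i-m)+1 : ℕ) : ℝ))
      = (s ^ m * s ^ (K+(i-m)+1)) * ((i.choose m : ℝ) * (-1)^(i-m)) / ((K+(i-m)+1 : ℕ) : ℝ) := by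
        ring
    _ = s ^ (K+i+1) * ((i.choose m : ℝ) * (-1)^(i-m)) / ((K+(i-m)+1 : ℕ) : ℝ) := by rw [hpow]
    _ = (i.choose m : ℝ) * (-1)^(i-m) / ((K+(i-m)+1 : ℕ) : ℝ) * s ^ (K+i+1) := by ring
end ErrorBoundAux

open MeasureTheory intervalIntegral Set Nat in
set_option maxHeartbeats 1000000 in
/-- Error-transfer principle, general case `1 ≤ j ≤ k`: under the same hypotheses on
the linear operator `L` (polynomial reproduction of degree `≤ 2k-1`, locality on `[0,1]`,
commuting with the Peano kernel integral, and the uniform hinge bound `‖f_u - Lf_u‖_∞ ≤ c`),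
for every `f ∈ C^{k+j}[0,1]` one has `‖f - Lf‖_∞ ≤ (c/(j+1)!) ‖f^{(k+j)}‖_∞`. -/
theorem error_bound_Ckj (k : ℕ) (hk : 2 ≤ k) (L : (ℝ → ℝ) →ₗ[ℝ] (ℝ → ℝ)) (c : ℝ) (hc : 0 < c)
    (hlocal : ∀ f g : ℝ → ℝ, Set.EqOn f g (Set.Icc (0:ℝ) 1) →
      Set.EqOn (L f) (L g) (Set.Icc (0:ℝ) 1))
    (hpoly : ∀ p : Polynomial ℝ, p.natDegree ≤ 2 * k - 1 →
      ∀ t ∈ Set.Icc (0:ℝ) 1, L (fun s => p.eval s) t = p.eval t)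
    (hbound : ∀ u ∈ Set.Ioo (0:ℝ) 1, ∀ t ∈ Set.Icc (0:ℝ) 1,
      |max (t - u) 0 ^ (k - 1) / (Nat.factorial (k - 1) : ℝ) -
        L (fun s => max (s - u) 0 ^ (k - 1) / (Nat.factorial (k - 1) : ℝ)) t| ≤ c)
    (hcomm : ∀ m : ℕ, ∀ g : ℝ → ℝ, ContinuousOn g (Set.Icc (0:ℝ) 1) →
      ∀ t ∈ Set.Icc (0:ℝ) 1,
      L (fun s => ∫ u in (0:ℝ)..1, max (s - u) 0 ^ m * g u) t =
        ∫ u in (0:ℝ)..1, L (fun s => max (s - u) 0 ^ m) t * g u)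
    (j : ℕ) (hj1 : 1 ≤ j) (hjk : j ≤ k)
    (f : ℝ → ℝ) (hf : ContDiffOn ℝ (k + j : ℕ) f (Set.Icc (0:ℝ) 1)) :
    ∀ t ∈ Set.Icc (0:ℝ) 1, |f t - L f t| ≤
      c / (Nat.factorial (j + 1) : ℝ) *
        ⨆ u : Set.Icc (0:ℝ) 1, |iteratedDerivWithin (k + j) f (Set.Icc (0:ℝ) 1) u| := by
  intro t ht
  set S : Set ℝ := Set.Icc (0:ℝ) 1 with hS
  have U : UniqueDiffOn ℝ S := uniqueDiffOn_Icc zero_lt_one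
  have hk1 : 1 ≤ k - 1 := by omega
  have hkk : k - 1 + 1 = k := by omega
  have hkfpos : (0:ℝ) < (k-1)! := by exact_mod_cast Nat.factorial_pos (k-1)
  -- basic objects
  set ph : ℝ → ℝ := iteratedDerivWithin (k + j) f S with hph
  set h : ℝ → ℝ := iteratedDerivWithin k f S with hh
  have hphcont : ContinuousOn ph S := hf.continuousOn_iteratedDerivWithin le_rfl U
  have hhcont : ContinuousOn h S := hf.continuousOn_iteratedDerivWithin
    (by exact_mod_cast Nat.le_add_right k j) U
  have hhC : ContDiffOn ℝ (j:ℕ) h S := aux_contdiff U j k f hf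
  have hpheq : Set.EqOn (iteratedDerivWithin j h S) ph S := aux_itdw U j k f
  set M : ℝ := ⨆ u : S, |ph u| with hMdef
  have hM : ∀ v ∈ S, |ph v| ≤ M := by
    obtain ⟨C, hC⟩ := isCompact_Icc.exists_bound_of_continuousOn hphcont
    have bdd : BddAbove (Set.range fun u : S => |ph u|) := by
      refine ⟨C, ?_⟩
      rintro y ⟨u, rfl⟩
      simpa using hC u u.2
    intro v hv
    exact le_ciSup bdd (⟨v, hv⟩ : S)
  have h0S : (0:ℝ) ∈ S := by constructor <;> norm_num
  have hM0 : 0 ≤ M := le_trans (abs_nonneg _) (hM 0 h0S)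
  -- the Taylor polynomial of h of order j-1 at 0
  set q : ℝ → ℝ := fun u => ∑ i ∈ Finset.range j, (iteratedDerivWithin i h S 0 / i !) * u ^ i
    with hqdef
  have hq_taylor : ∀ u : ℝ, taylorWithinEval h (j-1) S 0 u = q u := by
    intro u
    rw [taylor_within_apply, show j - 1 + 1 = j from by omega]
    apply Finset.sum_congr rfl
    intro i _
    rw [smul_eq_mul]
    ring
  have hqcont : Continuous q := by
    apply continuous_finset_sum
    intro i _
    fun_prop
  set r : ℝ → ℝ := fun u => h u - q u with hrdef
  have hrcont : ContinuousOn r S := hhcont.sub hqcont.continuousOn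
  have hr0 : r 0 = 0 := by
    have : q 0 = h 0 := by
      simp only [hqdef]
      rw [Finset.sum_eq_single 0]
      · simp
      · intro i _ hi; simp [zero_pow hi]
      · intro habs; exact absurd (Finset.mem_range.mpr (by omega)) habs
    simp [hrdef, this]
  -- integral form and bound for r
  have hjj : j - 1 + 1 = j := by omega
  have hfacj : (j:ℝ) * ((j-1)! : ℝ) = (j ! : ℝ) := by
    rw [← Nat.cast_mul]
    norm_cast
    exact Nat.mul_factorial_pred (by omega)
  have hjf1pos : (0:ℝ) < ((j-1)! : ℝ) := by exact_mod_cast Nat.factorial_pos (j-1)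
  have hcont2 : ContinuousOn (iteratedDerivWithin j h S) S :=
    hhC.continuousOn_iteratedDerivWithin le_rfl U
  have rbound : ∀ u ∈ S, |r u| ≤ M * u ^ j / j ! := by
    intro u huS
    obtain ⟨hu0, hu1⟩ := huS
    have hru : r u = ∫ v in (0:ℝ)..u, (((j-1)! : ℝ)⁻¹ * (u - v)^(j-1)) •
        iteratedDerivWithin j h S v := by
      have htay := taylor_int (g := h) (n := j - 1) (by rw [hjj]; exact hhC)
        (show u ∈ Set.Icc (0:ℝ) 1 from ⟨hu0, hu1⟩)
      rw [hjj] at htay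
      simp only [hrdef]
      rw [← hq_taylor u, htay]
      ring
    have habs : |r u| ≤ ∫ v in (0:ℝ)..u, |(((j-1)! : ℝ)⁻¹ * (u - v)^(j-1)) •
        iteratedDerivWithin j h S v| := by
      rw [hru]
      exact intervalIntegral.abs_integral_le_integral_abs hu0
    have hmono : (∫ v in (0:ℝ)..u, |(((j-1)! : ℝ)⁻¹ * (u - v)^(j-1)) •
        iteratedDerivWithin j h S v|) ≤
        ∫ v in (0:ℝ)..u, (((j-1)! : ℝ)⁻¹ * M) * (u - v)^(j-1) := by
      apply intervalIntegral.integral_mono_on hu0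
      · apply ContinuousOn.intervalIntegrable
        apply ContinuousOn.abs
        rw [Set.uIcc_of_le hu0]
        apply ContinuousOn.fun_smul
        · fun_prop
        · exact hcont2.mono (Set.Icc_subset_Icc le_rfl hu1)
      · apply ContinuousOn.intervalIntegrable
        fun_prop
      · intro v hv
        have hvS : v ∈ S := ⟨hv.1, le_trans hv.2 hu1⟩
        have huv : (0:ℝ) ≤ u - v := by linarith [hv.2]
        rw [smul_eq_mul, abs_mul, abs_mul, abs_of_nonneg (le_of_lt (inv_pos.mpr hjf1pos)),
          abs_of_nonneg (pow_nonneg huv _)]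
        have hD : |iteratedDerivWithin j h S v| ≤ M := by
          rw [hpheq hvS]; exact hM v hvS
        calc ((j-1)! : ℝ)⁻¹ * (u - v)^(j-1) * |iteratedDerivWithin j h S v|
            ≤ ((j-1)! : ℝ)⁻¹ * (u - v)^(j-1) * M := by
              apply mul_le_mul_of_nonneg_left hD
              positivity
          _ = (((j-1)! : ℝ)⁻¹ * M) * (u - v)^(j-1) := by ring
    have hval : (∫ v in (0:ℝ)..u, (((j-1)! : ℝ)⁻¹ * M) * (u - v)^(j-1))
        = M * u ^ j / j ! := by
      rw [intervalIntegral.integral_const_mul]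
      have := intervalIntegral.integral_comp_sub_left (a := (0:ℝ)) (b := u)
        (fun v => v ^ (j-1)) u
      simp only [sub_zero, sub_self] at this
      rw [this, integral_pow, hjj]
      have hz : ((0:ℝ)) ^ j = 0 := zero_pow (by omega)
      have hc1 : ((j-1 : ℕ):ℝ) + 1 = (j:ℝ) := by
        rw [Nat.cast_sub hj1]; norm_num
      rw [hz, sub_zero, hc1, ← hfacj]
      have hjpos : (0:ℝ) < (j:ℝ) := by exact_mod_cast (by omega : 0 < j)
      field_simp
      try ring
      try exact Or.inl trivial
    rw [← hval]
    exact le_trans habs hmono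
  -- Taylor expansion of f with kernel form
  have hT0 : ∀ y : ℝ, taylorWithinEval f (k-1) S 0 y
      = ∑ i ∈ Finset.range k, (iteratedDerivWithin i f S 0 / i !) * y ^ i := by
    intro y
    rw [taylor_within_apply, hkk]
    apply Finset.sum_congr rfl
    intro i _
    rw [smul_eq_mul]; ring
  have ffact : ∀ y ∈ S, f y = (∑ i ∈ Finset.range k, (iteratedDerivWithin i f S 0 / i !) * y ^ i)
      + ((k-1)! : ℝ)⁻¹ * ∫ u in (0:ℝ)..1, max (y - u) 0 ^ (k-1) * h u := by
    intro y hyS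
    obtain ⟨hy0, hy1⟩ := hyS
    have htay := taylor_int (g := f) (n := k - 1)
      (by rw [hkk]; exact hf.of_le (by exact_mod_cast Nat.le_add_right k j)) ⟨hy0, hy1⟩
    rw [hkk] at htay
    have int1 : IntervalIntegrable (fun u => max (y - u) 0 ^ (k-1) * h u) volume 0 y := by
      apply ContinuousOn.intervalIntegrable
      rw [Set.uIcc_of_le hy0]
      exact ContinuousOn.mul (by fun_prop) (hhcont.mono (Set.Icc_subset_Icc le_rfl hy1))
    have int2 : IntervalIntegrable (fun u => max (y - u) 0 ^ (k-1) * h u) volume y 1 := by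
      apply ContinuousOn.intervalIntegrable
      rw [Set.uIcc_of_le hy1]
      exact ContinuousOn.mul (by fun_prop) (hhcont.mono (Set.Icc_subset_Icc hy0 le_rfl))
    have hsplit : (∫ u in (0:ℝ)..1, max (y - u) 0 ^ (k-1) * h u)
        = ∫ u in (0:ℝ)..y, max (y - u) 0 ^ (k-1) * h u := by
      rw [← intervalIntegral.integral_add_adjacent_intervals int1 int2,
        kernel_zero_right (k-1) hk1 hy1 h, add_zero]
    have hmax : (∫ u in (0:ℝ)..y, max (y - u) 0 ^ (k-1) * h u)
        = ∫ u in (0:ℝ)..y, (y - u) ^ (k-1) * h u := by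
      apply intervalIntegral.integral_congr
      intro v hv
      rw [Set.uIcc_of_le hy0] at hv
      have hmx := max_eq_left (show (0:ℝ) ≤ y - v by linarith [hv.2])
      simp only [hmx]
    have hker : (∫ v in (0:ℝ)..y, (((k-1)! :ℝ)⁻¹ * (y - v)^(k-1)) • h v)
        = ((k-1)! : ℝ)⁻¹ * ∫ u in (0:ℝ)..1, max (y - u) 0 ^ (k-1) * h u := by
      rw [hsplit, hmax, ← intervalIntegral.integral_const_mul]
      apply intervalIntegral.integral_congr
      intro v _
      simp only [smul_eq_mul]
      ring
    rw [htay, hT0, hker]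
  clear hT0
  set b : ℝ → ℝ := fun u => L (fun sv => max (sv - u) 0 ^ (k-1)) t with hbdef
  set Sq : ℝ → ℝ := fun y => ∫ u in (0:ℝ)..1, max (y - u) 0 ^ (k-1) * q u with hSqdef
  set Sr : ℝ → ℝ := fun y => ∫ u in (0:ℝ)..1, max (y - u) 0 ^ (k-1) * r u with hSrdef
  set T0 : ℝ → ℝ := fun y => ∑ i ∈ Finset.range k, (iteratedDerivWithin i f S 0 / i !) * y ^ i
    with hT0def
  have hSsplit : ∀ y : ℝ, (∫ u in (0:ℝ)..1, max (y - u) 0 ^ (k-1) * h u) = Sq y + Sr y := by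
    intro y
    have iq : IntervalIntegrable (fun u => max (y - u) 0 ^ (k-1) * q u) volume 0 1 := by
      apply ContinuousOn.intervalIntegrable; fun_prop
    have ir : IntervalIntegrable (fun u => max (y - u) 0 ^ (k-1) * r u) volume 0 1 := by
      apply ContinuousOn.intervalIntegrable
      rw [Set.uIcc_of_le zero_le_one]
      exact ContinuousOn.mul (by fun_prop) hrcont
    rw [hSqdef, hSrdef]
    simp only
    rw [← intervalIntegral.integral_add iq ir]
    apply intervalIntegral.integral_congr
    intro u _
    simp only [hrdef]
    ring
  have hfF : Set.EqOn f (T0 + ((k-1)! : ℝ)⁻¹ • (Sq + Sr)) S := by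
    intro y hy
    have hf1 := ffact y hy
    simp only [Pi.add_apply, Pi.smul_apply, smul_eq_mul]
    rw [hf1, hSsplit y]
  have hLT0 : L T0 t = T0 t := by
    set Pc : Polynomial ℝ := ∑ i ∈ Finset.range k,
      Polynomial.C (iteratedDerivWithin i f S 0 / i !) * Polynomial.X ^ i with hPc
    have hev : ∀ y : ℝ, Pc.eval y = T0 y := by
      intro y; rw [hPc, hT0def]; simp [Polynomial.eval_finset_sum]
    have hdeg : Pc.natDegree ≤ 2*k - 1 := by
      apply Polynomial.natDegree_sum_le_of_forall_le
      intro i hi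
      refine le_trans (Polynomial.natDegree_C_mul_X_pow_le _ _) ?_
      have := Finset.mem_range.mp hi; omega
    have hl := hlocal T0 (fun y => Pc.eval y) (fun y _ => (hev y).symm) ht
    rw [hl, hpoly Pc hdeg t ht, hev]
  have hLSq : L Sq t = Sq t := by
    set Qc : Polynomial ℝ := ∑ i ∈ Finset.range j,
      Polynomial.C ((iteratedDerivWithin i h S 0 / i !) *
        (∑ m ∈ Finset.range (i+1), (i.choose m : ℝ) * (-1)^(i-m) / ((k-1+(i-m)+1 : ℕ) : ℝ))) *
        Polynomial.X ^ (k-1+i+1) with hQc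
    have hev : ∀ y ∈ S, Sq y = Qc.eval y := by
      intro y hy
      obtain ⟨hy0, hy1⟩ := hy
      have e1 : (fun u => max (y - u) 0 ^ (k-1) * q u) = fun u => ∑ i ∈ Finset.range j,
          (iteratedDerivWithin i h S 0 / i !) * (max (y - u) 0 ^ (k-1) * u ^ i) := by
        funext u
        rw [hqdef]
        simp only
        rw [Finset.mul_sum]
        apply Finset.sum_congr rfl
        intro i _
        ring
      rw [hSqdef]
      simp only
      rw [e1, intervalIntegral.integral_finset_sum]
      · rw [hQc]
        simp only [Polynomial.eval_finset_sum, Polynomial.eval_mul, Polynomial.eval_C,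
          Polynomial.eval_pow, Polynomial.eval_X]
        apply Finset.sum_congr rfl
        intro i _
        rw [intervalIntegral.integral_const_mul, kernel_monomial (k-1) i hk1 hy0 hy1]
        ring
      · intro i _
        apply ContinuousOn.intervalIntegrable
        apply ContinuousOn.mul continuousOn_const
        fun_prop
    have hdeg : Qc.natDegree ≤ 2*k - 1 := by
      apply Polynomial.natDegree_sum_le_of_forall_le
      intro i hi
      refine le_trans (Polynomial.natDegree_C_mul_X_pow_le _ _) ?_
      have := Finset.mem_range.mp hi; omega
    have hl := hlocal Sq (fun y => Qc.eval y) (fun y hy => hev y hy) ht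
    rw [hl, hpoly Qc hdeg t ht, ← hev t ht]
  have hLSr : L Sr t = ∫ u in (0:ℝ)..1, b u * r u := hcomm (k-1) r hrcont t ht
  have hLft : L f t = T0 t + ((k-1)! : ℝ)⁻¹ * (Sq t + ∫ u in (0:ℝ)..1, b u * r u) := by
    have h1 := hlocal f (T0 + ((k-1)! : ℝ)⁻¹ • (Sq + Sr)) hfF ht
    rw [h1, map_add, _root_.map_smul, map_add]
    simp only [Pi.add_apply, Pi.smul_apply, smul_eq_mul]
    rw [hLT0, hLSq, hLSr]
  have hft : f t = T0 t + ((k-1)! : ℝ)⁻¹ * (Sq t + Sr t) := by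
    have hf1 := ffact t ht
    rw [hSsplit t] at hf1
    exact hf1
  have hA : f t - L f t = ((k-1)! : ℝ)⁻¹ * (Sr t - ∫ u in (0:ℝ)..1, b u * r u) := by
    rw [hft, hLft]; ring
  have hab : ∀ u ∈ Set.Ioo (0:ℝ) 1, |max (t - u) 0 ^ (k-1) - b u| ≤ ((k-1)! : ℝ) * c := by
    intro u hu
    have hb1 := hbound u hu t ht
    have hfun : (fun sv => max (sv - u) 0 ^ (k-1) / ((k-1)! : ℝ))
        = ((k-1)! : ℝ)⁻¹ • (fun sv => max (sv - u) 0 ^ (k-1)) := by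
      funext sv
      simp [Pi.smul_apply, smul_eq_mul, div_eq_inv_mul]
    rw [hfun, _root_.map_smul] at hb1
    simp only [Pi.smul_apply, smul_eq_mul] at hb1
    rw [div_eq_inv_mul, ← mul_sub, abs_mul,
      abs_of_nonneg (le_of_lt (inv_pos.mpr hkfpos))] at hb1
    calc |max (t - u) 0 ^ (k-1) - b u|
        = ((k-1)! : ℝ) * (((k-1)! : ℝ)⁻¹ * |max (t - u) 0 ^ (k-1) - b u|) := by
          field_simp
      _ ≤ ((k-1)! : ℝ) * c := mul_le_mul_of_nonneg_left hb1 (le_of_lt hkfpos)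
  by_cases hbr : IntervalIntegrable (fun u => b u * r u) volume 0 1
  · -- integrable case
    have har : IntervalIntegrable (fun u => max (t - u) 0 ^ (k-1) * r u) volume 0 1 := by
      apply ContinuousOn.intervalIntegrable
      rw [Set.uIcc_of_le zero_le_one]
      exact ContinuousOn.mul (by fun_prop) hrcont
    have hSr_eq : Sr t - (∫ u in (0:ℝ)..1, b u * r u)
        = ∫ u in (0:ℝ)..1, (max (t - u) 0 ^ (k-1) * r u - b u * r u) := by
      rw [intervalIntegral.integral_sub har hbr, hSrdef]
    have hone : ∀ᵐ u ∂(volume : Measure ℝ), u ≠ 1 := by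
      rw [MeasureTheory.ae_iff]
      convert Real.volume_singleton (a := (1:ℝ)) using 2
      ext x
      simp
    have hbound2 : |∫ u in (0:ℝ)..1, (max (t - u) 0 ^ (k-1) * r u - b u * r u)|
        ≤ ∫ u in (0:ℝ)..1, ((k-1)! : ℝ) * c * (M * u ^ j / j !) := by
      refine le_trans (intervalIntegral.abs_integral_le_integral_abs zero_le_one) ?_
      apply intervalIntegral.integral_mono_ae_restrict zero_le_one ((har.sub hbr).abs)
      · apply ContinuousOn.intervalIntegrable
        fun_prop
      · rw [Filter.EventuallyLE, MeasureTheory.ae_restrict_iff' measurableSet_Icc]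
        filter_upwards [hone] with u hu1 huI
        rcases eq_or_lt_of_le huI.1 with h0 | h0
        · rw [← h0]
          simp only [hr0, mul_zero, sub_zero, abs_zero]
          have : (0:ℝ) ^ j = 0 := zero_pow (by omega)
          rw [this]
          simp
        · have huI' : u ∈ Set.Ioo (0:ℝ) 1 := ⟨h0, lt_of_le_of_ne huI.2 hu1⟩
          have e : max (t - u) 0 ^ (k-1) * r u - b u * r u
              = (max (t - u) 0 ^ (k-1) - b u) * r u := by ring
          rw [e, abs_mul]
          exact mul_le_mul (hab u huI') (rbound u huI) (abs_nonneg _) (by positivity)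
    have hint_val : (∫ u in (0:ℝ)..1, ((k-1)! : ℝ) * c * (M * u ^ j / j !))
        = ((k-1)! : ℝ) * c * M / ((j+1)! : ℝ) := by
      have e : (fun u : ℝ => ((k-1)! : ℝ) * c * (M * u ^ j / j !))
          = fun u : ℝ => (((k-1)! : ℝ) * c * M / (j ! : ℝ)) * u ^ j := by
        funext u; ring
      rw [e, intervalIntegral.integral_const_mul, integral_pow]
      have hfj1 : ((j+1)! : ℝ) = ((j:ℝ)+1) * (j ! : ℝ) := by
        rw [Nat.factorial_succ]; push_cast; ring
      have hz : (0:ℝ) ^ (j+1) = 0 := zero_pow (by omega)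
      rw [hz, one_pow, hfj1]
      have hjfpos : (0:ℝ) < (j ! : ℝ) := by exact_mod_cast Nat.factorial_pos j
      have hj1pos : (0:ℝ) < (j:ℝ) + 1 := by positivity
      field_simp
      try ring
      try exact Or.inl trivial
    have hcore : |Sr t - ∫ u in (0:ℝ)..1, b u * r u|
        ≤ ((k-1)! : ℝ) * c * M / ((j+1)! : ℝ) := by
      rw [hSr_eq]
      exact le_trans hbound2 (le_of_eq hint_val)
    rw [hA, abs_mul, abs_of_nonneg (le_of_lt (inv_pos.mpr hkfpos))]
    calc ((k-1)! : ℝ)⁻¹ * |Sr t - ∫ u in (0:ℝ)..1, b u * r u|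
        ≤ ((k-1)! : ℝ)⁻¹ * (((k-1)! : ℝ) * c * M / ((j+1)! : ℝ)) :=
          mul_le_mul_of_nonneg_left hcore (by positivity)
      _ = c / ((j+1)! : ℝ) * M := by
          field_simp
  · -- non-integrable case : t must be 0
    have hbni : ¬ IntervalIntegrable b volume 0 1 := by
      intro hbint
      exact hbr (hbint.mul_continuousOn (by rw [Set.uIcc_of_le zero_le_one]; exact hrcont))
    have hint0 : (∫ u in (0:ℝ)..1, b u * r u) = 0 := intervalIntegral.integral_undef hbr
    have ht0 : t = 0 := by
      have hcomm1 := hcomm (k-1) (fun _ => 1) continuousOn_const t ht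
      have hRHS : (∫ u in (0:ℝ)..1, b u * 1) = 0 := by
        rw [show (fun u => b u * 1) = b from funext fun u => mul_one _]
        exact intervalIntegral.integral_undef hbni
      have hevC : ∀ y ∈ S, (∫ u in (0:ℝ)..1, max (y - u) 0 ^ (k-1) * 1)
          = (Polynomial.C ((1:ℝ)/(k:ℝ)) * Polynomial.X ^ k).eval y := by
        intro y hy
        have e1 : (fun u : ℝ => max (y - u) 0 ^ (k-1) * 1)
            = fun u => max (y - u) 0 ^ (k-1) * u ^ 0 := by
          funext u; simp
        rw [e1, kernel_monomial (k-1) 0 hk1 hy.1 hy.2, Finset.sum_range_one]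
        norm_num
        have hc2 : ((k-1:ℕ):ℝ) + 1 = (k:ℝ) := by
          rw [Nat.cast_sub (by omega : 1 ≤ k)]; ring
        rw [hc2, hkk]
      have hdeg : (Polynomial.C ((1:ℝ)/(k:ℝ)) * Polynomial.X ^ k).natDegree ≤ 2*k-1 :=
        le_trans (Polynomial.natDegree_C_mul_X_pow_le _ _) (by omega)
      have hLHS := hlocal (fun y => ∫ u in (0:ℝ)..1, max (y - u) 0 ^ (k-1) * 1)
        (fun y => (Polynomial.C ((1:ℝ)/(k:ℝ)) * Polynomial.X ^ k).eval y)
        (fun y hy => hevC y hy) ht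
      have hzero : (Polynomial.C ((1:ℝ)/(k:ℝ)) * Polynomial.X ^ k).eval t = 0 := by
        rw [← hpoly _ hdeg t ht, ← hLHS, hcomm1, hRHS]
      simp only [Polynomial.eval_mul, Polynomial.eval_C, Polynomial.eval_pow,
        Polynomial.eval_X] at hzero
      have hkne : ((1:ℝ)/(k:ℝ)) ≠ 0 := by
        have : (0:ℝ) < (k:ℝ) := by exact_mod_cast (by omega : 0 < k)
        positivity
      have := (mul_eq_zero.mp hzero).resolve_left hkne
      exact pow_eq_zero_iff (by omega : k ≠ 0) |>.mp this
    have hSr0 : Sr t = 0 := by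
      rw [ht0]
      have hz : Set.EqOn (fun u => max ((0:ℝ) - u) 0 ^ (k-1) * r u) (fun _ => (0:ℝ))
          (Set.uIcc (0:ℝ) 1) := by
        intro u hu
        rw [Set.uIcc_of_le zero_le_one] at hu
        have hmx : max (0 - u) 0 = 0 := max_eq_right (by linarith [hu.1])
        simp only [hmx, zero_pow (by omega : k - 1 ≠ 0), zero_mul]
      calc Sr 0 = ∫ u in (0:ℝ)..1, (0:ℝ) := intervalIntegral.integral_congr hz
        _ = 0 := intervalIntegral.integral_zero
    rw [hA, hSr0, hint0]
    simp only [sub_zero, mul_zero, abs_zero]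
    exact mul_nonneg (by positivity) hM0
end

section
/- Let $k \ge 3$, let $0 = \tau_0 < \tau_1 < \cdots < \tau_{2k-4} < \tau_{2k-3} = 1$, let $H_k$ be the Hermite spline interpolation operator at these knots, and let $S^*(t) = \frac{1}{(2k)!}\left(t^{2k} + 2\sum_{j=1}^{2k-4} (-1)^j (t - \tau_j)_+^{2k}\right)$ be the perfect spline. Then for every $f \in C^{2k}[0,1]$ with $\|f^{(2k)}\|_\infty \le 1$ and every $t \in [0,1]$, $|f(t) - (H_k f)(t)| \le |S^*(t) - (H_k S^*)(t)|$. -/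
/-- Knot configuration `0 = τ₀ < τ₁ < ⋯ < τ_{2k-4} < τ_{2k-3} = 1`. -/
def ValidKnots (k : ℕ) (τ : ℕ → ℝ) : Prop :=
  τ 0 = 0 ∧ τ (2 * k - 3) = 1 ∧ ∀ i < 2 * k - 3, τ i < τ (i + 1)

/-- `s` is a spline of degree `2k-1` with simple knots `τ₁, …, τ_{2k-4}`. -/
def IsSplineOdd (k : ℕ) (τ : ℕ → ℝ) (s : ℝ → ℝ) : Prop :=
  ContDiffOn ℝ (2 * k - 2 : ℕ) s (Set.Icc (0:ℝ) 1) ∧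
  ∀ i < 2 * k - 3, ∃ p : Polynomial ℝ, p.natDegree ≤ 2 * k - 1 ∧
    ∀ t ∈ Set.Icc (τ i) (τ (i + 1)), s t = p.eval t

/-- `s` is the Hermite spline interpolant of `f`: it matches `f` and `f'` at all knots. -/
def IsHermiteInterp (k : ℕ) (τ : ℕ → ℝ) (f s : ℝ → ℝ) : Prop :=
  IsSplineOdd k τ s ∧ ∀ i ≤ 2 * k - 3,
    s (τ i) = f (τ i) ∧
    derivWithin s (Set.Icc (0:ℝ) 1) (τ i) = derivWithin f (Set.Icc (0:ℝ) 1) (τ i)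

/-- The perfect spline `S*(t) = (1/(2k)!)(t^{2k} + 2∑_{j=1}^{2k-4}(-1)^j(t-τ_j)_+^{2k})`. -/
noncomputable def perfectSpline (k : ℕ) (τ : ℕ → ℝ) (t : ℝ) : ℝ :=
  (1 / (Nat.factorial (2 * k) : ℝ)) *
    (t ^ (2 * k) +
      2 * ∑ j ∈ Finset.Icc 1 (2 * k - 4), (-1 : ℝ) ^ j * max (t - τ j) 0 ^ (2 * k))


open Set Filter Topology Polynomial

noncomputable def pp (n : ℕ) (x : ℝ) : ℝ := max x 0 ^ n

lemma pp_continuous (n : ℕ) : Continuous (pp n) :=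
  (continuous_id.max continuous_const).pow n

lemma pp_hasDerivAt (n : ℕ) (hn : 2 ≤ n) (x : ℝ) :
    HasDerivAt (pp n) (n * pp (n - 1) x) x := by
  rcases lt_trichotomy x 0 with hx | rfl | hx
  · have h0 : pp n =ᶠ[𝓝 x] fun _ => (0:ℝ) := by
      filter_upwards [Iio_mem_nhds hx] with y hy
      have : y ≤ 0 := le_of_lt (mem_Iio.mp hy)
      simp [pp, max_eq_right this, zero_pow (by omega : n ≠ 0)]
    have : n * pp (n-1) x = 0 := by
      simp [pp, max_eq_right (le_of_lt hx), zero_pow (by omega : n - 1 ≠ 0)]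
    rw [this]
    exact (hasDerivAt_const x (0:ℝ)).congr_of_eventuallyEq h0
  · -- at 0, derivative 0
    have h0 : n * pp (n-1) 0 = 0 := by
      simp [pp, zero_pow (by omega : n - 1 ≠ 0)]
    rw [h0, hasDerivAt_iff_isLittleO]
    simp only [pp, sub_zero, max_self, zero_pow (by omega : n ≠ 0), smul_zero, sub_zero]
    calc (fun y : ℝ => max y 0 ^ n) =O[𝓝 0] (fun y : ℝ => y ^ 2) := by
            rw [Asymptotics.isBigO_iff]
            refine ⟨1, ?_⟩
            filter_upwards [Metric.ball_mem_nhds (0:ℝ) one_pos] with y hy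
            simp only [Real.norm_eq_abs, one_mul]
            have h1 : |max y 0| ≤ |y| := by
              rcases le_or_gt y 0 with h | h
              · simp [max_eq_right h]
              · simp [max_eq_left h.le]
            have h2 : |y| < 1 := by simpa [Real.dist_eq] using hy
            calc |max y 0 ^ n| = |max y 0| ^ n := by rw [abs_pow]
              _ ≤ |y| ^ n := pow_le_pow_left₀ (abs_nonneg _) h1 n
              _ ≤ |y| ^ 2 := pow_le_pow_of_le_one (abs_nonneg _) h2.le hn
              _ = |y ^ 2| := (abs_pow y 2).symm
      _ =o[𝓝 0] (fun y : ℝ => y) := by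
            simpa using Asymptotics.isLittleO_pow_pow (𝕜 := ℝ) (m := 1) (n := 2) one_lt_two
  · have h0 : pp n =ᶠ[𝓝 x] fun y => y ^ n := by
      filter_upwards [Ioi_mem_nhds hx] with y hy
      have : (0:ℝ) ≤ y := le_of_lt (mem_Ioi.mp hy)
      simp [pp, max_eq_left this]
    have : n * pp (n-1) x = n * x ^ (n-1) := by
      simp [pp, max_eq_left (le_of_lt hx)]
    rw [this]
    exact (hasDerivAt_pow n x).congr_of_eventuallyEq h0

lemma pp_deriv (n : ℕ) (hn : 2 ≤ n) : deriv (pp n) = fun x => (n : ℝ) * pp (n-1) x := by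
  funext x; exact (pp_hasDerivAt n hn x).deriv

lemma pp_contDiff : ∀ (m n : ℕ), m + 1 ≤ n → ContDiff ℝ m (pp n) := by
  intro m
  induction m with
  | zero => intro n _; exact contDiff_zero.mpr (pp_continuous n)
  | succ m ih =>
    intro n hn
    have h2 : 2 ≤ n := by omega
    rw [show ((m+1 : ℕ) : WithTop ℕ∞) = (m : WithTop ℕ∞) + 1 by push_cast; ring,
      contDiff_succ_iff_deriv]
    refine ⟨fun x => (pp_hasDerivAt n h2 x).differentiableAt, by simp, ?_⟩
    rw [pp_deriv n h2]
    have : (fun x => (n : ℝ) * pp (n-1) x) = (fun x => (n:ℝ) • pp (n-1) x) := by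
      funext x; simp [smul_eq_mul]
    rw [this]
    exact ((ih (n-1) (by omega))).const_smul (n:ℝ)



-- knot monotonicity
lemma knots_mono {k : ℕ} {τ : ℕ → ℝ} (hτ : ValidKnots k τ) {a b : ℕ}
    (hab : a ≤ b) (hb : b ≤ 2 * k - 3) : τ a ≤ τ b := by
  induction b with
  | zero => simp_all
  | succ n ih =>
    rcases Nat.lt_or_ge a (n+1) with h | h
    · exact le_trans (ih (by omega) (by omega)) (le_of_lt (hτ.2.2 n (by omega)))
    · have : a = n + 1 := by omega
      simp [this]

lemma knots_mem {k : ℕ} {τ : ℕ → ℝ} (hτ : ValidKnots k τ) {i : ℕ} (hi : i ≤ 2 * k - 3) :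
    τ i ∈ Icc (0:ℝ) 1 := by
  constructor
  · rw [← hτ.1]; exact knots_mono hτ (Nat.zero_le i) hi
  · rw [← hτ.2.1]; exact knots_mono hτ hi le_rfl

lemma perfectSpline_contDiff (k : ℕ) (hk : 3 ≤ k) (τ : ℕ → ℝ) :
    ContDiff ℝ (2 * k - 2 : ℕ) (perfectSpline k τ) := by
  unfold perfectSpline
  apply ContDiff.mul contDiff_const
  apply ContDiff.add (contDiff_id.pow _)
  apply ContDiff.mul contDiff_const
  apply ContDiff.sum
  intro j _
  apply ContDiff.mul contDiff_const
  have h1 : ContDiff ℝ (2 * k - 2 : ℕ) (pp (2*k)) := pp_contDiff _ _ (by omega)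
  have h2 : ContDiff ℝ (2 * k - 2 : ℕ) (fun t : ℝ => t - τ j) :=
    contDiff_id.sub contDiff_const
  exact h1.comp h2

noncomputable def Qpoly (k : ℕ) (τ : ℕ → ℝ) (j : ℕ) : Polynomial ℝ :=
  C (1 / (Nat.factorial (2*k) : ℝ)) * (X ^ (2*k) +
    C 2 * ∑ i ∈ Finset.Icc 1 j, C ((-1:ℝ)^i) * (X - C (τ i)) ^ (2*k))

lemma Qpoly_eqOn {k : ℕ} (hk : 3 ≤ k) {τ : ℕ → ℝ} (hτ : ValidKnots k τ) {j : ℕ}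
    (hj : j ≤ 2 * k - 4) {t : ℝ} (ht : t ∈ Ioo (τ j) (τ (j+1))) :
    perfectSpline k τ t = (Qpoly k τ j).eval t := by
  unfold perfectSpline Qpoly
  simp only [eval_mul, eval_C, eval_add, eval_pow, eval_X, eval_sub, eval_finset_sum]
  have key : ∑ i ∈ Finset.Icc 1 (2*k-4), (-1:ℝ) ^ i * max (t - τ i) 0 ^ (2 * k)
      = ∑ i ∈ Finset.Icc 1 j, (-1:ℝ) ^ i * (t - τ i) ^ (2 * k) := by
    rw [← Finset.sum_subset (Finset.Icc_subset_Icc_right hj)]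
    · apply Finset.sum_congr rfl
      intro i hi
      simp only [Finset.mem_Icc] at hi
      have : τ i ≤ τ j := knots_mono hτ hi.2 (by omega)
      have htpos : 0 ≤ t - τ i := by linarith [ht.1]
      simp [max_eq_left htpos]
    · intro i hi hni
      simp only [Finset.mem_Icc] at hi hni
      have : τ (j+1) ≤ τ i := knots_mono hτ (by omega) (by omega)
      have : t - τ i ≤ 0 := by linarith [ht.2]
      simp [max_eq_right this, zero_pow (by omega : 2*k ≠ 0)]
  rw [← key]

lemma Qpoly_natDegree_aux : True := trivial

lemma Qpoly_iterderiv {k : ℕ} (hk : 3 ≤ k) (τ : ℕ → ℝ) {j : ℕ} (x : ℝ) :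
    (Polynomial.derivative^[2*k] (Qpoly k τ j)).eval x = (-1:ℝ)^j := by
  unfold Qpoly
  rw [iterate_derivative_C_mul]
  rw [show Polynomial.derivative^[2*k] (X ^ (2*k) + C 2 * ∑ i ∈ Finset.Icc 1 j,
      C ((-1:ℝ)^i) * (X - C (τ i)) ^ (2*k)) =
      Polynomial.derivative^[2*k] (X ^ (2*k) : ℝ[X]) + Polynomial.derivative^[2*k]
      (C 2 * ∑ i ∈ Finset.Icc 1 j, C ((-1:ℝ)^i) * (X - C (τ i)) ^ (2*k)) from
      iterate_map_add _ _ _ _]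
  rw [iterate_derivative_C_mul, iterate_derivative_sum]
  have hX : Polynomial.derivative^[2*k] (X ^ (2*k) : ℝ[X]) = Polynomial.C ((2*k).factorial : ℝ) := by
    have := iterate_derivative_X_sub_pow_self (2*k) (0:ℝ)
    simpa using this
  have hterm : ∀ i, Polynomial.derivative^[2*k] (C ((-1:ℝ)^i) * (X - C (τ i)) ^ (2*k)) =
      C ((-1:ℝ)^i) * C ((2*k).factorial : ℝ) := by
    intro i
    rw [iterate_derivative_C_mul, iterate_derivative_X_sub_pow_self]
    norm_cast
  simp only [hterm, hX]
  simp only [eval_mul, eval_C, eval_add, eval_finset_sum, eval_mul, eval_C]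
  rw [← Finset.sum_mul]
  have hsum : ∑ i ∈ Finset.Icc 1 j, ((-1:ℝ))^i = ((-1:ℝ)^j - 1) / 2 := by
    induction j with
    | zero => simp
    | succ n ih =>
      rw [Finset.sum_Icc_succ_top (by omega)]
      rw [ih]
      rw [pow_succ]
      ring
  rw [hsum]
  have hfac : ((2*k).factorial : ℝ) ≠ 0 := Nat.cast_ne_zero.mpr (Nat.factorial_ne_zero _)
  field_simp
  ring


lemma list_rolle (F : ℝ → ℝ) (hc : ContinuousOn F (Icc (0:ℝ) 1)) :
    ∀ l : List ℝ, l.Pairwise (·<·) → (∀ x ∈ l, x ∈ Icc (0:ℝ) 1) → (∀ x ∈ l, F x = 0) →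
    ∃ t : List ℝ, t.length + 1 = max l.length 1 ∧ t.Pairwise (·<·) ∧
      (∀ y ∈ t, deriv F y = 0) ∧ (∀ y ∈ t, y ∉ l) ∧
      (∀ y ∈ t, ∃ a ∈ l, a < y) ∧ (∀ y ∈ t, ∃ b ∈ l, y < b) := by
  intro l
  induction l with
  | nil => intro _ _ _; exact ⟨[], by simp, by simp, by simp, by simp, by simp, by simp⟩
  | cons a tl ih =>
    cases tl with
    | nil => intro _ _ _; exact ⟨[], by simp, by simp, by simp, by simp, by simp, by simp⟩
    | cons b rest =>
      intro hsort hmem hz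
      have hab : a < b := (List.pairwise_cons.mp hsort).1 b (by simp)
      have haI : a ∈ Icc (0:ℝ) 1 := hmem a (by simp)
      have hbI : b ∈ Icc (0:ℝ) 1 := hmem b (by simp)
      have hsub : Icc a b ⊆ Icc (0:ℝ) 1 := Icc_subset_Icc haI.1 hbI.2
      obtain ⟨c, hcmem, hcz⟩ := exists_deriv_eq_zero hab (hc.mono hsub)
        (by rw [hz a (by simp), hz b (by simp)])
      have hsort' : (b :: rest).Pairwise (·<·) := (List.pairwise_cons.mp hsort).2
      have hblow : ∀ x ∈ b :: rest, b ≤ x := by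
        intro x hx
        rcases List.mem_cons.mp hx with rfl | hx
        · exact le_rfl
        · exact le_of_lt ((List.pairwise_cons.mp hsort').1 x hx)
      obtain ⟨t', hlen, hsrt, hdz, hnm, hlow, hup⟩ := ih hsort'
        (fun x hx => hmem x (by simp [hx])) (fun x hx => hz x (by simp [hx]))
      have hct' : ∀ y ∈ t', c < y := by
        intro y hy
        obtain ⟨a', ha', haly⟩ := hlow y hy
        have := hblow a' ha'
        have := hcmem.2
        linarith
      refine ⟨c :: t', ?_, ?_, ?_, ?_, ?_, ?_⟩
      · simp only [List.length_cons] at *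
        omega
      · exact List.pairwise_cons.mpr ⟨hct', hsrt⟩
      · intro y hy
        rcases List.mem_cons.mp hy with rfl | hy
        · exact hcz
        · exact hdz y hy
      · intro y hy
        rcases List.mem_cons.mp hy with rfl | hy
        · intro hmem'
          rcases List.mem_cons.mp hmem' with rfl | h2
          · exact absurd hcmem.1 (lt_irrefl _)
          · exact absurd (hblow y h2) (not_le.mpr hcmem.2)
        · intro hmem'
          rcases List.mem_cons.mp hmem' with rfl | h2
          · obtain ⟨a', ha', hlt⟩ := hlow y hy
            have h1 : b ≤ a' := hblow a' ha'
            linarith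
          · exact hnm y hy h2
      · intro y hy
        rcases List.mem_cons.mp hy with rfl | hy
        · exact ⟨a, by simp, hcmem.1⟩
        · obtain ⟨a', ha', hlt⟩ := hlow y hy
          exact ⟨a', by simp [ha'], hlt⟩
      · intro y hy
        rcases List.mem_cons.mp hy with rfl | hy
        · exact ⟨b, by simp, hcmem.2⟩
        · obtain ⟨b', hb', hlt⟩ := hup y hy
          exact ⟨b', by simp [hb'], hlt⟩



/-- Finset version of the Rolle step, keeping a set `K` of known zeros of `G`. -/
lemma finset_rolle (F G : ℝ → ℝ) (hc : ContinuousOn F (Icc (0:ℝ) 1))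
    (hFG : ∀ x ∈ Ioo (0:ℝ) 1, deriv F x = G x)
    (Z K : Finset ℝ) (hKZ : K ⊆ Z) (hZ : ↑Z ⊆ Icc (0:ℝ) 1)
    (hz : ∀ x ∈ Z, F x = 0) (hK : ∀ x ∈ K, G x = 0) :
    ∃ W : Finset ℝ, ↑W ⊆ Icc (0:ℝ) 1 ∧ Z.card + K.card ≤ W.card + 1 ∧
      ∀ x ∈ W, G x = 0 := by
  set l := Z.sort (·≤·) with hl
  have hsort : l.Pairwise (·<·) := Z.sortedLT_sort.pairwise
  have hmeml : ∀ x, x ∈ l ↔ x ∈ Z := fun x => Finset.mem_sort _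
  obtain ⟨t, hlen, hsrt, hdz, hnm, hlow, hup⟩ := list_rolle F hc l hsort
    (fun x hx => hZ ((hmeml x).mp hx)) (fun x hx => hz x ((hmeml x).mp hx))
  have htIoo : ∀ y ∈ t, y ∈ Ioo (0:ℝ) 1 := by
    intro y hy
    obtain ⟨a, ha, hay⟩ := hlow y hy
    obtain ⟨b, hb, hyb⟩ := hup y hy
    have haI := hZ ((hmeml a).mp ha)
    have hbI := hZ ((hmeml b).mp hb)
    exact ⟨lt_of_le_of_lt haI.1 hay, lt_of_lt_of_le hyb hbI.2⟩
  have hnodup : t.Nodup := hsrt.nodup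
  refine ⟨K ∪ t.toFinset, ?_, ?_, ?_⟩
  · intro x hx
    rcases Finset.mem_union.mp (by exact_mod_cast hx) with hx | hx
    · exact hZ (hKZ hx)
    · exact Ioo_subset_Icc_self (htIoo x (List.mem_toFinset.mp hx))
  · have hdisj : Disjoint K t.toFinset := by
      rw [Finset.disjoint_right]
      intro x hx
      exact fun hxK => hnm x (List.mem_toFinset.mp hx) ((hmeml x).mpr (hKZ hxK))
    rw [Finset.card_union_of_disjoint hdisj, List.toFinset_card_of_nodup hnodup]
    have hlcard : l.length = Z.card := Finset.length_sort _
    omega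
  · intro x hx
    rcases Finset.mem_union.mp hx with hx | hx
    · exact hK x hx
    · have hy := List.mem_toFinset.mp hx
      rw [← hFG x (htIoo x hy)]
      exact hdz x hy

/-- Iterated Rolle chain for `iteratedDerivWithin` on `Icc 0 1`. -/
lemma rolle_chain (N : ℕ) (h : ℝ → ℝ) (hsm : ContDiffOn ℝ (N : ℕ) h (Icc (0:ℝ) 1)) :
    ∀ (j i : ℕ), i + j ≤ N → ∀ Z : Finset ℝ, ↑Z ⊆ Icc (0:ℝ) 1 →
    (∀ x ∈ Z, iteratedDerivWithin i h (Icc (0:ℝ) 1) x = 0) →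
    ∃ W : Finset ℝ, ↑W ⊆ Icc (0:ℝ) 1 ∧ Z.card ≤ W.card + j ∧
      ∀ x ∈ W, iteratedDerivWithin (i+j) h (Icc (0:ℝ) 1) x = 0 := by
  intro j
  induction j with
  | zero => intro i _ Z hZ hz; exact ⟨Z, hZ, by omega, by simpa using hz⟩
  | succ j ih =>
    intro i hij Z hZ hz
    have hcont : ContinuousOn (iteratedDerivWithin i h (Icc (0:ℝ) 1)) (Icc (0:ℝ) 1) :=
      hsm.continuousOn_iteratedDerivWithin (by exact_mod_cast Nat.cast_le.mpr (by omega : i ≤ N))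
        (uniqueDiffOn_Icc zero_lt_one)
    have hFG : ∀ x ∈ Ioo (0:ℝ) 1, deriv (iteratedDerivWithin i h (Icc (0:ℝ) 1)) x =
        iteratedDerivWithin (i+1) h (Icc (0:ℝ) 1) x := by
      intro x hx
      rw [iteratedDerivWithin_succ,
        derivWithin_of_mem_nhds (Icc_mem_nhds hx.1 hx.2)]
    obtain ⟨W1, hW1, hcard1, hz1⟩ := finset_rolle _ _ hcont hFG Z ∅ (Finset.empty_subset _)
      hZ hz (by simp)
    obtain ⟨W, hW, hcard, hzf⟩ := ih (i+1) (by omega) W1 hW1 hz1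
    refine ⟨W, hW, by simpa using le_trans (by omega : Z.card ≤ W1.card + 1) (by omega), ?_⟩
    · intro x hx
      rw [show i + (j+1) = (i+1) + j by omega]
      exact hzf x hx


lemma alt_convex_count (m : ℕ) (τ : ℕ → ℝ) (g : ℝ → ℝ)
    (hconv : ∀ j ≤ m, ∀ a b c : ℝ, τ j ≤ a → a < b → b < c → c ≤ τ (j+1) →
       (-1:ℝ)^j * g b < max ((-1:ℝ)^j * g a) ((-1:ℝ)^j * g c))
    (hττ : ∀ j ≤ m, τ j ≤ τ (j+1))
    (Z : Finset ℝ) (hZ : ∀ z ∈ Z, τ 0 ≤ z ∧ z ≤ τ (m+1))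
    (hz : ∀ x ∈ Z, g x = 0) : Z.card ≤ m + 2 := by
  set n : ℕ → ℕ := fun j => (Z.filter (fun z => z ≤ τ j)).card with hn
  have key : ∀ j ≤ m + 1, n j ≤ j ∨ (n j ≤ j + 1 ∧ (-1:ℝ)^j * g (τ j) ≤ 0) := by
    intro j
    induction j with
    | zero =>
      intro _
      by_cases h0 : τ 0 ∈ Z
      · right
        constructor
        · have hsub : Z.filter (fun z => z ≤ τ 0) ⊆ {τ 0} := by
            intro z hzm
            simp only [Finset.mem_filter] at hzm
            have := (hZ z hzm.1).1
            simp [le_antisymm hzm.2 this]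
          calc (Z.filter (fun z => z ≤ τ 0)).card ≤ ({τ 0} : Finset ℝ).card :=
                Finset.card_le_card hsub
            _ = 1 := Finset.card_singleton _
        · simp [hz _ h0]
      · left
        have hsub : Z.filter (fun z => z ≤ τ 0) = ∅ := by
          rw [Finset.filter_eq_empty_iff]
          intro z hzm hle
          exact h0 (by rwa [← le_antisymm hle (hZ z hzm).1])
        simp [hn, hsub]
    | succ j ihj =>
      intro hj1
      have hjm : j ≤ m := by omega
      have ihj' := ihj (by omega)
      set M : Finset ℝ := Z.filter (fun z => τ j < z ∧ z ≤ τ (j+1)) with hM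
      have hMz : ∀ z ∈ M, g z = 0 := by
        intro z hzm; exact hz z (Finset.mem_filter.mp hzm).1
      have hMlo : ∀ z ∈ M, τ j < z := fun z hzm => (Finset.mem_filter.mp hzm).2.1
      have hMhi : ∀ z ∈ M, z ≤ τ (j+1) := fun z hzm => (Finset.mem_filter.mp hzm).2.2
      have hsplit : n (j+1) = n j + M.card := by
        rw [hn]
        simp only []
        have : Z.filter (fun z => z ≤ τ (j+1)) =
            Z.filter (fun z => z ≤ τ j) ∪ M := by
          ext z
          simp only [Finset.mem_filter, Finset.mem_union, hM]
          constructor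
          · rintro ⟨hzZ, hle⟩
            rcases le_or_gt z (τ j) with h | h
            · exact Or.inl ⟨hzZ, h⟩
            · exact Or.inr ⟨hzZ, h, hle⟩
          · rintro (⟨hzZ, hle⟩ | ⟨hzZ, _, hle⟩)
            · exact ⟨hzZ, le_trans hle (hττ j hjm)⟩
            · exact ⟨hzZ, hle⟩
        rw [show (Finset.filter (fun z => z ≤ τ (j+1)) Z) = Finset.filter (fun z => z ≤ τ j) Z ∪ M from this, Finset.card_union_of_disjoint]
        rw [Finset.disjoint_left]
        intro z hz1 hz2
        simp only [Finset.mem_filter, hM] at hz1 hz2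
        exact absurd hz1.2 (not_le.mpr hz2.2.1)
      -- convexity facts
      have hφM : ∀ z ∈ M, (-1:ℝ)^j * g z = 0 := by intro z hzm; rw [hMz z hzm]; ring
      -- M.card ≤ 2 always
      have hM2 : M.card ≤ 2 := by
        by_contra hcon
        push_neg at hcon
        obtain ⟨z1, hz1⟩ := Finset.card_pos.mp (by omega : 0 < M.card)
        have hmin := M.min'_mem ⟨z1, hz1⟩
        have hmax := M.max'_mem ⟨z1, hz1⟩
        set a := M.min' ⟨z1, hz1⟩
        set c := M.max' ⟨z1, hz1⟩
        have hac : a ≠ c := by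
          intro h
          have : M.card ≤ 1 := by
            apply Finset.card_le_one.mpr
            intro x hx y hy
            have h1 := M.min'_le x hx
            have h2 := M.le_max' x hx
            have h3 := M.min'_le y hy
            have h4 := M.le_max' y hy
            have hx2 : x = a := le_antisymm (h ▸ h2) h1
            have hy2 : y = a := le_antisymm (h ▸ h4) h3
            rw [hx2, hy2]
          omega
        have hcard : 0 < ((M.erase a).erase c).card := by
          have h1 : ((M.erase a).erase c).card = M.card - 2 := by
            rw [Finset.card_erase_of_mem, Finset.card_erase_of_mem hmin]
            · omega
            · exact Finset.mem_erase.mpr ⟨Ne.symm hac, hmax⟩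
          omega
        obtain ⟨b, hb⟩ := Finset.card_pos.mp hcard
        have hbM : b ∈ M := Finset.mem_of_mem_erase (Finset.mem_of_mem_erase hb)
        have hba : b ≠ a := Finset.ne_of_mem_erase (Finset.mem_of_mem_erase hb)
        have hbc : b ≠ c := Finset.ne_of_mem_erase hb
        have h1 : a < b := lt_of_le_of_ne (M.min'_le b hbM) (Ne.symm hba)
        have h2 : b < c := lt_of_le_of_ne (M.le_max' b hbM) hbc
        have := hconv j hjm a b c (le_of_lt (hMlo a hmin)) h1 h2 (hMhi c hmax)
        rw [hφM a hmin, hφM b hbM, hφM c hmax] at this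
        simp at this
      -- tight-case sign production
      have hsign : ∀ z ∈ M, z < τ (j+1) → ((-1:ℝ)^j * g (τ j) ≤ 0 ∨ (∃ z' ∈ M, z' < z)) →
          (-1:ℝ)^(j+1) * g (τ (j+1)) ≤ 0 := by
        intro z hzm hzlt hcase
        have hkey : 0 < (-1:ℝ)^j * g (τ (j+1)) := by
          rcases hcase with hneg | ⟨z', hz'm, hz'z⟩
          · have := hconv j hjm (τ j) z (τ (j+1)) le_rfl (hMlo z hzm) hzlt le_rfl
            rw [hφM z hzm] at this
            rcases max_cases ((-1:ℝ)^j * g (τ j)) ((-1:ℝ)^j * g (τ (j+1))) with ⟨hmx, _⟩ | ⟨hmx, _⟩ <;>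
              rw [hmx] at this <;> linarith
          · have := hconv j hjm z' z (τ (j+1)) (le_of_lt (hMlo z' hz'm)) hz'z hzlt le_rfl
            rw [hφM z hzm, hφM z' hz'm] at this
            rcases max_cases (0:ℝ) ((-1:ℝ)^j * g (τ (j+1))) with ⟨hmx, _⟩ | ⟨hmx, _⟩ <;>
              rw [hmx] at this <;> linarith
        have : (-1:ℝ)^(j+1) * g (τ (j+1)) = -((-1:ℝ)^j * g (τ (j+1))) := by
          rw [pow_succ]; ring
        rw [this]
        linarith
      rcases ihj' with hleft | ⟨hle, hsgn⟩
      · -- n j ≤ j, M.card ≤ 2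
        rcases Nat.lt_or_ge (n (j+1)) (j+2) with h | h
        · left; omega
        · right
          have hM2' : M.card = 2 := by omega
          have hnj : n j = j := by omega
          constructor
          · omega
          · -- two elements z1 < z2
            obtain ⟨z1, hz1, z2, hz2, hne⟩ := Finset.one_lt_card.mp (by omega : 1 < M.card)
            rcases lt_or_gt_of_ne hne with hlt | hgt
            · rcases eq_or_lt_of_le (hMhi z2 hz2) with heq | hlt2
              · rw [← heq, hz z2 (Finset.mem_filter.mp hz2).1]
                simp
              · exact hsign z2 hz2 hlt2 (Or.inr ⟨z1, hz1, hlt⟩)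
            · rcases eq_or_lt_of_le (hMhi z1 hz1) with heq | hlt2
              · rw [← heq, hz z1 (Finset.mem_filter.mp hz1).1]
                simp
              · exact hsign z1 hz1 hlt2 (Or.inr ⟨z2, hz2, hgt⟩)
      · -- n j ≤ j + 1 with sign; M.card ≤ 1
        have hM1 : M.card ≤ 1 := by
          by_contra hcon
          push_neg at hcon
          obtain ⟨z1, hz1, z2, hz2, hne⟩ := Finset.one_lt_card.mp (by omega : 1 < M.card)
          rcases lt_or_gt_of_ne hne with hlt | hgt
          · have := hconv j hjm (τ j) z1 z2 le_rfl (hMlo z1 hz1) hlt (hMhi z2 hz2)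
            rw [hφM z1 hz1, hφM z2 hz2] at this
            rcases max_cases ((-1:ℝ)^j * g (τ j)) (0:ℝ) with ⟨hmx, _⟩ | ⟨hmx, _⟩ <;>
              rw [hmx] at this <;> linarith
          · have := hconv j hjm (τ j) z2 z1 le_rfl (hMlo z2 hz2) hgt (hMhi z1 hz1)
            rw [hφM z1 hz1, hφM z2 hz2] at this
            rcases max_cases ((-1:ℝ)^j * g (τ j)) (0:ℝ) with ⟨hmx, _⟩ | ⟨hmx, _⟩ <;>
              rw [hmx] at this <;> linarith
        rcases Nat.lt_or_ge (n (j+1)) (j+2) with h | h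
        · left; omega
        · right
          constructor
          · omega
          · have hM1' : M.card = 1 := by omega
            obtain ⟨z1, hz1⟩ := Finset.card_pos.mp (by omega : 0 < M.card)
            rcases eq_or_lt_of_le (hMhi z1 hz1) with heq | hlt2
            · rw [← heq, hz z1 (Finset.mem_filter.mp hz1).1]
              simp
            · exact hsign z1 hz1 hlt2 (Or.inl hsgn)
  have hfin := key (m+1) le_rfl
  have hall : n (m+1) = Z.card := by
    rw [hn]
    simp only []
    congr 1
    apply Finset.filter_true_of_mem
    intro z hzm
    exact (hZ z hzm).2
  omega



-- extra small lemmas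
lemma idw_nhds {F : ℝ → ℝ} {s : Set ℝ} {x : ℝ} (hs : s ∈ 𝓝 x) (n : ℕ) :
    iteratedDerivWithin n F s x = iteratedDeriv n F x := by
  rw [iteratedDerivWithin_eq_iteratedFDerivWithin, iteratedDeriv_eq_iteratedFDeriv,
    ← iteratedFDerivWithin_univ,
    iteratedFDerivWithin_congr_set (Filter.eventuallyEq_univ.mpr hs)]

lemma contDiff_polyeval (n : ℕ∞) (p : ℝ[X]) : ContDiff ℝ n (fun y => p.eval y) := by
  induction p using Polynomial.induction_on' with
  | add p q hp hq => simpa [Polynomial.eval_add] using hp.add hq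
  | monomial k a =>
      simpa [Polynomial.eval_monomial] using (contDiff_const (c := a)).mul (contDiff_id.pow k)

lemma poly_iteratedDeriv (p : ℝ[X]) (n : ℕ) :
    iteratedDeriv n (fun y => p.eval y) = fun y => (Polynomial.derivative^[n] p).eval y := by
  induction n with
  | zero => simp
  | succ n ih =>
    rw [iteratedDeriv_succ, ih]
    funext y
    rw [Function.iterate_succ_apply']
    exact Polynomial.deriv (p := Polynomial.derivative^[n] p)

lemma knots_strict {k : ℕ} {τ : ℕ → ℝ} (hτ : ValidKnots k τ) {a b : ℕ}
    (hab : a < b) (hb : b ≤ 2 * k - 3) : τ a < τ b :=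
  lt_of_lt_of_le (hτ.2.2 a (by omega)) (knots_mono hτ hab hb)

/-- Pointwise perfect-spline bound: for every `f ∈ C^{2k}[0,1]` with `‖f^{(2k)}‖_∞ ≤ 1`,
the Hermite interpolation error of `f` is pointwise dominated by that of the perfect
spline `S*`. -/
theorem perfect_spline_pointwise_bound (k : ℕ) (hk : 3 ≤ k) (τ : ℕ → ℝ)
    (hτ : ValidKnots k τ) (f : ℝ → ℝ)
    (hf : ContDiffOn ℝ (2 * k : ℕ) f (Set.Icc (0:ℝ) 1))
    (hfb : ∀ t ∈ Set.Icc (0:ℝ) 1,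
      |iteratedDerivWithin (2 * k) f (Set.Icc (0:ℝ) 1) t| ≤ 1)
    (sf sS : ℝ → ℝ) (hsf : IsHermiteInterp k τ f sf)
    (hsS : IsHermiteInterp k τ (perfectSpline k τ) sS) :
    ∀ t ∈ Set.Icc (0:ℝ) 1,
      |f t - sf t| ≤ |perfectSpline k τ t - sS t| := by
  intro t ht
  by_contra hcon
  push_neg at hcon
  set S := perfectSpline k τ with hSdef
  have hUD : UniqueDiffOn ℝ (Icc (0:ℝ) 1) := uniqueDiffOn_Icc zero_lt_one
  have hefne : f t - sf t ≠ 0 := by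
    intro h0
    rw [h0] at hcon
    simp only [abs_zero] at hcon
    exact absurd hcon (not_lt.mpr (abs_nonneg _))
  set β : ℝ := (S t - sS t) / (f t - sf t) with hβdef
  have hβ : |β| < 1 := by
    rw [hβdef, abs_div, div_lt_one (abs_pos.mpr hefne)]
    exact hcon
  set h : ℝ → ℝ := fun x => (S x - sS x) - β * (f x - sf x) with hh
  -- smoothness of h
  have hsS1 : ContDiffOn ℝ (2*k-2 : ℕ) sS (Icc (0:ℝ) 1) := hsS.1.1
  have hsf1 : ContDiffOn ℝ (2*k-2 : ℕ) sf (Icc (0:ℝ) 1) := hsf.1.1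
  have hfs : ContDiffOn ℝ (2*k-2 : ℕ) f (Icc (0:ℝ) 1) :=
    hf.of_le (by exact_mod_cast Nat.cast_le.mpr (by omega : 2*k-2 ≤ 2*k))
  have hSs : ContDiffOn ℝ (2*k-2 : ℕ) S (Icc (0:ℝ) 1) :=
    (perfectSpline_contDiff k hk τ).contDiffOn
  have hsm : ContDiffOn ℝ (2*k-2 : ℕ) h (Icc (0:ℝ) 1) :=
    (hSs.sub hsS1).sub (contDiffOn_const.mul (hfs.sub hsf1))
  have hknotmem : ∀ i ≤ 2*k-3, τ i ∈ Icc (0:ℝ) 1 := fun i hi => knots_mem hτ hi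
  -- zeros of h at knots
  have hzero : ∀ i ≤ 2*k-3, h (τ i) = 0 := by
    intro i hi
    have h1 := (hsf.2 i hi).1
    have h2 := (hsS.2 i hi).1
    simp only [hh, h1, h2]
    ring
  -- zeros of h' at knots
  have hdzero : ∀ i ≤ 2*k-3, iteratedDerivWithin 1 h (Icc (0:ℝ) 1) (τ i) = 0 := by
    intro i hi
    have hmem := hknotmem i hi
    have hu : UniqueDiffWithinAt ℝ (Icc (0:ℝ) 1) (τ i) := hUD _ hmem
    have hone : (1:ℕ) ≤ (2*k-2 : ℕ) := by omega
    have hone' : ((2*k-2 : ℕ) : WithTop ℕ∞) ≠ 0 := by exact_mod_cast (by omega : (2*k-2 : ℕ) ≠ 0)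
    have dS : DifferentiableWithinAt ℝ S (Icc (0:ℝ) 1) (τ i) :=
      (hSs.differentiableOn hone') _ hmem
    have dsS : DifferentiableWithinAt ℝ sS (Icc (0:ℝ) 1) (τ i) :=
      (hsS1.differentiableOn hone') _ hmem
    have df : DifferentiableWithinAt ℝ f (Icc (0:ℝ) 1) (τ i) :=
      (hfs.differentiableOn hone') _ hmem
    have dsf : DifferentiableWithinAt ℝ sf (Icc (0:ℝ) 1) (τ i) :=
      (hsf1.differentiableOn hone') _ hmem
    rw [iteratedDerivWithin_one]
    have : derivWithin h (Icc (0:ℝ) 1) (τ i) =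
        (derivWithin S (Icc (0:ℝ) 1) (τ i) - derivWithin sS (Icc (0:ℝ) 1) (τ i)) -
          β * (derivWithin f (Icc (0:ℝ) 1) (τ i) - derivWithin sf (Icc (0:ℝ) 1) (τ i)) := by
      rw [hh]
      rw [derivWithin_fun_sub (f := fun y => S y - sS y) (g := fun y => β * (f y - sf y))
          (dS.sub dsS) ((df.sub dsf).const_mul β),
        derivWithin_fun_sub dS dsS, derivWithin_const_mul (d := fun y => f y - sf y) β (df.sub dsf),
        derivWithin_fun_sub df dsf]
    rw [this, (hsf.2 i hi).2, (hsS.2 i hi).2]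
    ring
  -- initial zero set
  set K : Finset ℝ := (Finset.range (2*k-2)).image τ with hKdef
  have hKmem : ∀ x ∈ K, ∃ i ≤ 2*k-3, x = τ i := by
    intro x hx
    obtain ⟨i, hi, rfl⟩ := Finset.mem_image.mp hx
    refine ⟨i, ?_, rfl⟩
    have := Finset.mem_range.mp hi
    omega
  have hKmem' : ∀ x ∈ K, ∃ i ≤ 2*k-3, x = τ i := hKmem
  have htK : t ∉ K := by
    intro hmem
    obtain ⟨i, hi, rfl⟩ := hKmem t hmem
    exact hefne (by rw [(hsf.2 i hi).1]; ring)
  have hKcard : K.card = 2*k-2 := by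
    rw [hKdef, Finset.card_image_of_injOn, Finset.card_range]
    intro a ha b hb hab
    simp only [Finset.coe_range, Set.mem_Iio] at ha hb
    by_contra hne
    rcases Nat.lt_or_ge a b with hlt | hge
    · exact absurd hab (ne_of_lt (knots_strict hτ hlt (by omega)))
    · have : b < a := by omega
      exact absurd hab.symm (ne_of_lt (knots_strict hτ this (by omega)))
  set Z0 : Finset ℝ := insert t K with hZ0def
  have hZ0card : Z0.card = 2*k-1 := by
    rw [hZ0def, Finset.card_insert_of_notMem htK, hKcard]
    omega
  have hZ0sub : ↑Z0 ⊆ Icc (0:ℝ) 1 := by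
    intro x hx
    rcases Finset.mem_insert.mp (by exact_mod_cast hx) with rfl | hx
    · exact ht
    · obtain ⟨i, hi, rfl⟩ := hKmem x hx
      exact hknotmem i hi
  have hZ0zero : ∀ x ∈ Z0, h x = 0 := by
    intro x hx
    rcases Finset.mem_insert.mp hx with rfl | hx
    · simp only [hh, hβdef]
      field_simp
      ring
    · obtain ⟨i, hi, rfl⟩ := hKmem x hx
      exact hzero i hi
  -- Rolle step 1
  have hFG1 : ∀ x ∈ Ioo (0:ℝ) 1, deriv h x = iteratedDerivWithin 1 h (Icc (0:ℝ) 1) x := by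
    intro x hx
    rw [iteratedDerivWithin_one,
      derivWithin_of_mem_nhds (Icc_mem_nhds hx.1 hx.2)]
  obtain ⟨W1, hW1sub, hW1card, hW1z⟩ := finset_rolle h _ hsm.continuousOn hFG1 Z0 K
    (Finset.subset_insert _ _) hZ0sub hZ0zero
    (fun x hx => by obtain ⟨i, hi, rfl⟩ := hKmem x hx; exact hdzero i hi)
  -- Rolle chain
  obtain ⟨W, hWsub, hWcard, hWz⟩ := rolle_chain (2*k-2) h hsm (2*k-3) 1 (by omega)
    W1 hW1sub hW1z
  rw [show 1 + (2*k-3) = 2*k-2 by omega] at hWz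
  set g := iteratedDerivWithin (2*k-2) h (Icc (0:ℝ) 1) with hgdef
  -- derivative identities on the interior
  have hgB : ∀ y ∈ Ioo (0:ℝ) 1, deriv g y = iteratedDeriv (2*k-1) h y := by
    intro y hy
    have hEv : g =ᶠ[𝓝 y] iteratedDeriv (2*k-2) h := by
      filter_upwards [Ioo_mem_nhds hy.1 hy.2] with z hz
      exact idw_nhds (Icc_mem_nhds hz.1 hz.2) _
    have hstep : deriv (iteratedDeriv (2*k-2) h) y = iteratedDeriv (2*k-1) h y := by
      rw [← iteratedDeriv_succ]
      congr 1
      omega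
    rw [hEv.deriv_eq]
    exact hstep
  have hgC : ∀ x ∈ Ioo (0:ℝ) 1, deriv (deriv g) x = iteratedDeriv (2*k) h x := by
    intro x hx
    have hEv : deriv g =ᶠ[𝓝 x] iteratedDeriv (2*k-1) h := by
      filter_upwards [Ioo_mem_nhds hx.1 hx.2] with z hz
      exact hgB z hz
    have hstep : deriv (iteratedDeriv (2*k-1) h) x = iteratedDeriv (2*k) h x := by
      rw [← iteratedDeriv_succ]
      congr 1
      omega
    rw [hEv.deriv_eq]
    exact hstep
  -- the convexity oracle
  have hconv : ∀ j ≤ 2*k-4, ∀ a b c : ℝ, τ j ≤ a → a < b → b < c → c ≤ τ (j+1) →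
      (-1:ℝ)^j * g b < max ((-1:ℝ)^j * g a) ((-1:ℝ)^j * g c) := by
    intro j hj a b c haj hab hbc hcj
    have hj3 : j + 1 ≤ 2*k-3 := by omega
    have hIoosub : Ioo (τ j) (τ (j+1)) ⊆ Ioo (0:ℝ) 1 := by
      intro x hx
      constructor
      · calc (0:ℝ) = τ 0 := hτ.1.symm
          _ ≤ τ j := knots_mono hτ (Nat.zero_le j) (by omega)
          _ < x := hx.1
      · calc x < τ (j+1) := hx.2
          _ ≤ τ (2*k-3) := knots_mono hτ hj3 le_rfl
          _ = 1 := hτ.2.1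
    have hIccsub : Icc (τ j) (τ (j+1)) ⊆ Icc (0:ℝ) 1 :=
      Icc_subset_Icc (hknotmem j (by omega)).1 (hknotmem (j+1) hj3).2
    -- value of the 2k-th derivative of h on the open knot interval
    obtain ⟨pS, hpSdeg, hpSeq⟩ := hsS.1.2 j (by omega)
    obtain ⟨pf, hpfdeg, hpfeq⟩ := hsf.1.2 j (by omega)
    have hval : ∀ x ∈ Ioo (τ j) (τ (j+1)),
        iteratedDeriv (2*k) h x = (-1:ℝ)^j - β * iteratedDerivWithin (2*k) f (Icc (0:ℝ) 1) x := by
      intro x hx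
      have hsnx : Ioo (τ j) (τ (j+1)) ∈ 𝓝 x := isOpen_Ioo.mem_nhds hx
      have hUDs : UniqueDiffOn ℝ (Ioo (τ j) (τ (j+1))) := isOpen_Ioo.uniqueDiffOn
      have hEq : EqOn h (fun y => ((Qpoly k τ j).eval y - pS.eval y) -
          β * (f y - pf.eval y)) (Ioo (τ j) (τ (j+1))) := by
        intro y hy
        simp only [hh, hSdef]
        rw [Qpoly_eqOn hk hτ hj hy, hpSeq y (Ioo_subset_Icc_self hy),
          hpfeq y (Ioo_subset_Icc_self hy)]
      have hA : ContDiffOn ℝ (2*k : ℕ) (fun y => (Qpoly k τ j).eval y) (Ioo (τ j) (τ (j+1))) :=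
        (contDiff_polyeval _ _).contDiffOn
      have hB : ContDiffOn ℝ (2*k : ℕ) (fun y => pS.eval y) (Ioo (τ j) (τ (j+1))) :=
        (contDiff_polyeval _ _).contDiffOn
      have hC : ContDiffOn ℝ (2*k : ℕ) (fun y => pf.eval y) (Ioo (τ j) (τ (j+1))) :=
        (contDiff_polyeval _ _).contDiffOn
      have hfm : ContDiffOn ℝ (2*k : ℕ) f (Ioo (τ j) (τ (j+1))) :=
        hf.mono (fun y hy => Ioo_subset_Icc_self (hIoosub hy))
      calc iteratedDeriv (2*k) h x
          = iteratedDerivWithin (2*k) h (Ioo (τ j) (τ (j+1))) x := (idw_nhds hsnx _).symm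
        _ = iteratedDerivWithin (2*k) (fun y => ((Qpoly k τ j).eval y - pS.eval y) -
              β * (f y - pf.eval y)) (Ioo (τ j) (τ (j+1))) x :=
            iteratedDerivWithin_congr hEq hx
        _ = ((iteratedDerivWithin (2*k) (fun y => (Qpoly k τ j).eval y) (Ioo (τ j) (τ (j+1))) x
              - iteratedDerivWithin (2*k) (fun y => pS.eval y) (Ioo (τ j) (τ (j+1))) x)
              - β * (iteratedDerivWithin (2*k) f (Ioo (τ j) (τ (j+1))) x
              - iteratedDerivWithin (2*k) (fun y => pf.eval y) (Ioo (τ j) (τ (j+1))) x)) := by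
            have e1 : iteratedDerivWithin (2*k) (fun y => ((Qpoly k τ j).eval y - pS.eval y) -
                β * (f y - pf.eval y)) (Ioo (τ j) (τ (j+1))) x =
                iteratedDerivWithin (2*k) (fun y => (Qpoly k τ j).eval y - pS.eval y)
                  (Ioo (τ j) (τ (j+1))) x -
                iteratedDerivWithin (2*k) (fun y => β * (f y - pf.eval y))
                  (Ioo (τ j) (τ (j+1))) x :=
              iteratedDerivWithin_sub hx hUDs ((hA.sub hB) x hx) ((contDiffOn_const.mul (hfm.sub hC)) x hx)
            have e2 : iteratedDerivWithin (2*k) (fun y => (Qpoly k τ j).eval y - pS.eval y)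
                (Ioo (τ j) (τ (j+1))) x =
                iteratedDerivWithin (2*k) (fun y => (Qpoly k τ j).eval y)
                  (Ioo (τ j) (τ (j+1))) x -
                iteratedDerivWithin (2*k) (fun y => pS.eval y) (Ioo (τ j) (τ (j+1))) x :=
              iteratedDerivWithin_sub hx hUDs (hA x hx) (hB x hx)
            have e3 : iteratedDerivWithin (2*k) (fun y => β * (f y - pf.eval y))
                (Ioo (τ j) (τ (j+1))) x =
                β * iteratedDerivWithin (2*k) (fun y => f y - pf.eval y)
                  (Ioo (τ j) (τ (j+1))) x :=
              iteratedDerivWithin_const_mul hx hUDs β ((hfm.sub hC) x hx)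
            have e4 : iteratedDerivWithin (2*k) (fun y => f y - pf.eval y)
                (Ioo (τ j) (τ (j+1))) x =
                iteratedDerivWithin (2*k) f (Ioo (τ j) (τ (j+1))) x -
                iteratedDerivWithin (2*k) (fun y => pf.eval y) (Ioo (τ j) (τ (j+1))) x :=
              iteratedDerivWithin_sub hx hUDs (hfm x hx) (hC x hx)
            rw [e1, e2, e3, e4]
        _ = (-1:ℝ)^j - β * iteratedDerivWithin (2*k) f (Icc (0:ℝ) 1) x := by
            rw [idw_nhds hsnx, idw_nhds hsnx, idw_nhds hsnx, idw_nhds hsnx]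
            simp only [poly_iteratedDeriv]
            rw [Qpoly_iterderiv hk τ x]
            rw [Polynomial.iterate_derivative_eq_zero (by omega : pS.natDegree < 2*k),
              Polynomial.iterate_derivative_eq_zero (by omega : pf.natDegree < 2*k)]
            rw [idw_nhds (Icc_mem_nhds (hIoosub hx).1 (hIoosub hx).2)]
            simp
    -- strict convexity of φ = (-1)^j • g on the closed knot interval
    set φ : ℝ → ℝ := fun y => (-1:ℝ)^j * g y with hφdef
    have hgcont : ContinuousOn g (Icc (0:ℝ) 1) :=
      hsm.continuousOn_iteratedDerivWithin le_rfl hUD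
    have hφcont : ContinuousOn φ (Icc (τ j) (τ (j+1))) :=
      (continuousOn_const.mul (hgcont.mono hIccsub))
    have hφ2 : ∀ x ∈ interior (Icc (τ j) (τ (j+1))), 0 < (deriv^[2] φ) x := by
      intro x hx
      rw [interior_Icc] at hx
      have hx01 : x ∈ Ioo (0:ℝ) 1 := hIoosub hx
      have hd1 : deriv φ = fun y => (-1:ℝ)^j * deriv g y :=
        funext fun y => deriv_const_mul_field _
      have : (deriv^[2] φ) x = (-1:ℝ)^j * deriv (deriv g) x := by
        rw [show deriv^[2] φ = deriv (deriv φ) from by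
          simp [Function.iterate_succ_apply', Function.iterate_zero]]
        rw [hd1]
        exact deriv_const_mul_field _
      rw [this, hgC x hx01, hval x hx]
      set D := iteratedDerivWithin (2*k) f (Icc (0:ℝ) 1) x with hDdef
      have hD1 : |D| ≤ 1 := hfb x (Ioo_subset_Icc_self hx01)
      have hbd : |β * D| < 1 := by
        rw [abs_mul]
        calc |β| * |D| ≤ |β| * 1 := by
              apply mul_le_mul_of_nonneg_left hD1 (abs_nonneg _)
          _ = |β| := mul_one _
          _ < 1 := hβ
      have h1 := abs_lt.mp hbd
      rcases Nat.even_or_odd j with he | ho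
      · rw [he.neg_one_pow]
        nlinarith [h1.1, h1.2]
      · rw [ho.neg_one_pow]
        nlinarith [h1.1, h1.2]
    have hcv : StrictConvexOn ℝ (Icc (τ j) (τ (j+1))) φ :=
      strictConvexOn_of_deriv2_pos (convex_Icc _ _) hφcont hφ2
    -- derive the three-point inequality
    have hac : a < c := hab.trans hbc
    have hca : (0:ℝ) < c - a := by linarith
    set lam : ℝ := (c - b) / (c - a) with hlam
    set mu : ℝ := (b - a) / (c - a) with hmu
    have hlampos : 0 < lam := div_pos (by linarith) hca
    have hmupos : 0 < mu := div_pos (by linarith) hca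
    have hsum : lam + mu = 1 := by
      rw [hlam, hmu]
      field_simp
      ring
    have hbeq : lam • a + mu • c = b := by
      simp only [smul_eq_mul, hlam, hmu]
      field_simp
      ring
    have hmema : a ∈ Icc (τ j) (τ (j+1)) := ⟨haj, by linarith⟩
    have hmemc : c ∈ Icc (τ j) (τ (j+1)) := ⟨by linarith, hcj⟩
    have hlt := hcv.2 hmema hmemc (ne_of_lt hac) hlampos hmupos hsum
    rw [hbeq] at hlt
    calc φ b < lam * φ a + mu * φ c := by simpa [smul_eq_mul] using hlt
      _ ≤ lam * max (φ a) (φ c) + mu * max (φ a) (φ c) := by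
          apply add_le_add
          · exact mul_le_mul_of_nonneg_left (le_max_left _ _) hlampos.le
          · exact mul_le_mul_of_nonneg_left (le_max_right _ _) hmupos.le
      _ = max (φ a) (φ c) := by rw [← add_mul, hsum, one_mul]
  -- apply the counting lemma
  have hττ : ∀ j ≤ 2*k-4, τ j ≤ τ (j+1) := fun j hj =>
    le_of_lt (hτ.2.2 j (by omega))
  have hWmem : ∀ z ∈ W, τ 0 ≤ z ∧ z ≤ τ (2*k-4+1) := by
    intro z hz
    have := hWsub hz
    rw [hτ.1, show 2*k-4+1 = 2*k-3 by omega, hτ.2.1]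
    exact ⟨this.1, this.2⟩
  have hcount := alt_convex_count (2*k-4) τ g
    (by intro j hj; exact hconv j hj) hττ W hWmem hWz
  -- numbers
  have hge : 2*k-1 ≤ W.card := by
    have h1 : Z0.card + K.card ≤ W1.card + 1 := hW1card
    rw [hZ0card, hKcard] at h1
    omega
  omega
end
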